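/- Let h : [0,1] → ℝ be a measurable function that is nowhere approximately differentiable. If X ⊆ [0,1] is a measurable set of positive measure and χ_X·h is integral over AD[0,1] (i.e., satisfies a monic polynomial equation with coefficients in AD[0,1], multiplied by χ_X), then a contradiction follows; that is, for any monic polynomial p with coefficients in AD[0,1], χ_X·p(h) ≠ 0 on any set of positive measure. In particular, for the commutative algebra case n = 1: h − a is invertible in S[0,1] (its support is all of [0,1]) for every a ∈ AD[0,1]. -/

import Mathlib

/-!
Let `p(s, y) = yⁿ + Σ cᵢ(s) yⁱ` vanish at `y = h s` for a.e. `s ∈ X`. Take a density point `t` of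
that zero set at which the `cᵢ` are approximately differentiable and `h` is approximately
continuous. Subtracting the relations at `s` and `t` gives
`(h s - h t) · D(s) + (s - t) · Σ slope cᵢ t s · h(t)ⁱ = 0`, where the divided difference `D(s)`
tends to `∂p/∂y (t, h t)` along the approximate neighbourhood filter. So if `∂p/∂y (t, h t) ≠ 0`,
`h` is approximately differentiable at `t`. Hence `∂p/∂y (·, h ·) = 0` a.e. on `X`; divided by `n`
this is a monic relation of degree `n - 1`, and induction ends at the constant polynomial `1`.
-/

open MeasureTheory Set Filter

noncomputable def densityOne (E : Set ℝ) (t : ℝ) : Prop :=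
  Tendsto (fun h : ℝ => volume (E ∩ Icc (t - h) (t + h)) / ENNReal.ofReal (2 * h))
    (nhdsWithin 0 (Ioi 0)) (nhds 1)

noncomputable def HasApproxDerivAt (f : ℝ → ℝ) (L t : ℝ) : Prop :=
  ∀ ε > (0:ℝ), densityOne {s : ℝ | s ≠ t ∧ |(f s - f t) / (s - t) - L| < ε} t

noncomputable def ApproxDiffAE (f : ℝ → ℝ) : Prop :=
  ∀ᵐ t ∂(volume.restrict (Icc (0:ℝ) 1)), ∃ L, HasApproxDerivAt f L t

open Topology
open scoped ENNReal

lemma volume_Icc_sub_add (t r : ℝ) : volume (Icc (t - r) (t + r)) = ENNReal.ofReal (2 * r) := by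
  rw [Real.volume_Icc]; ring_nf

lemma volume_inter_Icc_div_le_one (E : Set ℝ) (t : ℝ) {r : ℝ} (hr : 0 < r) :
    volume (E ∩ Icc (t - r) (t + r)) / ENNReal.ofReal (2 * r) ≤ 1 := by
  rw [ENNReal.div_le_iff (by positivity) ENNReal.ofReal_ne_top, one_mul, ← volume_Icc_sub_add]
  exact measure_mono inter_subset_right

lemma densityOne.mono {S S' : Set ℝ} {t : ℝ} (hS : densityOne S t) (hSS' : S ⊆ S') :
    densityOne S' t := by
  refine tendsto_of_tendsto_of_tendsto_of_le_of_le' hS tendsto_const_nhds ?_ ?_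
  · exact Eventually.of_forall fun r => by gcongr
  · filter_upwards [self_mem_nhdsWithin] with r (hr : 0 < r)
    exact volume_inter_Icc_div_le_one S' t hr

lemma densityOne.diff_null {S N : Set ℝ} {t : ℝ} (hS : densityOne S t) (hN : volume N = 0) :
    densityOne (S \ N) t := by
  refine hS.congr fun r => ?_
  rw [← inter_sdiff_right_comm, measure_sdiff_null hN]

lemma densityOne_ball (t : ℝ) {δ : ℝ} (hδ : 0 < δ) : densityOne (Metric.ball t δ) t := by
  refine tendsto_const_nhds.congr' ?_
  filter_upwards [Ioo_mem_nhdsGT hδ] with r ⟨hr, hrδ⟩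
  rw [inter_eq_self_of_subset_right, volume_Icc_sub_add,
    ENNReal.div_self (by positivity) ENNReal.ofReal_ne_top]
  rw [Real.ball_eq_Ioo]
  exact Icc_subset_Ioo (by linarith) (by linarith)

lemma measure_inter_add_measure_inter_le {α : Type*} [MeasurableSpace α] (μ : Measure α)
    (A : Set α) {B : Set α} (hB : MeasurableSet B) (I : Set α) :
    μ (A ∩ I) + μ (B ∩ I) ≤ μ (A ∩ B ∩ I) + μ I := by
  have hA : μ (A ∩ I) ≤ μ (A ∩ B ∩ I) + μ (I \ B) := by
    refine (measure_mono fun x (hx : x ∈ A ∩ I) => ?_).trans (measure_union_le _ _)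
    obtain ⟨hxA, hxI⟩ := hx
    by_cases hxB : x ∈ B
    exacts [Or.inl ⟨⟨hxA, hxB⟩, hxI⟩, Or.inr ⟨hxI, hxB⟩]
  calc μ (A ∩ I) + μ (B ∩ I) ≤ μ (A ∩ B ∩ I) + μ (I \ B) + μ (I ∩ B) := by
        rw [inter_comm B I]; gcongr
    _ = μ (A ∩ B ∩ I) + μ I := by
        rw [add_assoc, add_comm (μ (I \ B)), measure_inter_add_sdiff I hB]

lemma densityOne.inter {A B : Set ℝ} {t : ℝ} (hA : densityOne A t) (hB : densityOne B t)
    (hBm : MeasurableSet B) : densityOne (A ∩ B) t := by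
  have hsum := ENNReal.Tendsto.sub (hA.add hB) (tendsto_const_nhds (x := (1 : ℝ≥0∞)))
    (Or.inr ENNReal.one_ne_top)
  rw [ENNReal.add_sub_cancel_right ENNReal.one_ne_top] at hsum
  refine tendsto_of_tendsto_of_tendsto_of_le_of_le' hsum tendsto_const_nhds ?_ ?_
  · filter_upwards [self_mem_nhdsWithin] with r (hr : 0 < r)
    rw [tsub_le_iff_right, ENNReal.div_add_div_same,
      ← ENNReal.div_self (a := ENNReal.ofReal (2 * r)) (by positivity) ENNReal.ofReal_ne_top,
      ENNReal.div_add_div_same, ← volume_Icc_sub_add t r]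
    exact ENNReal.div_le_div_right (measure_inter_add_measure_inter_le volume A hBm _) _
  · filter_upwards [self_mem_nhdsWithin] with r (hr : 0 < r)
    exact volume_inter_Icc_div_le_one _ t hr

lemma ae_densityOne {S : Set ℝ} (hS : MeasurableSet S) :
    ∀ᵐ t, t ∈ S → densityOne S t := by
  filter_upwards [Besicovitch.ae_tendsto_measure_inter_div_of_measurableSet volume hS]
    with t ht htS
  rw [indicator_of_mem htS, Pi.one_apply] at ht
  refine ht.congr' ?_
  filter_upwards [self_mem_nhdsWithin] with r (hr : 0 < r)
  rw [Real.closedBall_eq_Icc, Real.volume_Icc]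
  ring_nf

def approxNhds (t : ℝ) : Filter ℝ where
  sets := {S | ∃ M ⊆ S, MeasurableSet M ∧ densityOne M t}
  univ_sets := ⟨univ, subset_rfl, MeasurableSet.univ, (densityOne_ball t one_pos).mono (subset_univ _)⟩
  sets_of_superset := fun ⟨M, hMS, hM, hd⟩ hST => ⟨M, hMS.trans hST, hM, hd⟩
  inter_sets := fun ⟨M, hMS, hM, hdM⟩ ⟨N, hNT, hN, hdN⟩ =>
    ⟨M ∩ N, inter_subset_inter hMS hNT, hM.inter hN, hdM.inter hdN hN⟩

lemma mem_approxNhds {M : Set ℝ} {t : ℝ} (hM : MeasurableSet M) (hd : densityOne M t) :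
    M ∈ approxNhds t :=
  ⟨M, subset_rfl, hM, hd⟩

lemma approxNhds_le_nhds (t : ℝ) : approxNhds t ≤ 𝓝 t := fun _ hU =>
  let ⟨_, hδ, hball⟩ := Metric.mem_nhds_iff.1 hU
  ⟨_, hball, measurableSet_ball, densityOne_ball t hδ⟩

lemma hasApproxDerivAt_iff_tendsto_slope {f : ℝ → ℝ} {L t : ℝ} (hf : Measurable f) :
    HasApproxDerivAt f L t ↔ Tendsto (slope f t) (approxNhds t ⊓ 𝓟 {t}ᶜ) (𝓝 L) := by
  simp only [Metric.tendsto_nhds, Real.dist_eq, slope_def_field]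
  refine forall₂_congr fun ε hε => ⟨fun hd => ?_, fun hl => ?_⟩
  · have hm : MeasurableSet {s : ℝ | s ≠ t ∧ |(f s - f t) / (s - t) - L| < ε} :=
      (measurableSet_singleton t).compl.inter <| measurableSet_lt
        (((hf.sub measurable_const).div (measurable_id.sub measurable_const)).sub
          measurable_const).abs measurable_const
    exact mem_of_superset (inter_mem_inf (mem_approxNhds hm hd) (mem_principal_self _))
      fun s hs => hs.1.2
  · obtain ⟨M, hMS, hM, hd⟩ := mem_inf_principal.1 hl
    exact (hd.diff_null (measure_singleton t)).mono fun s hs => ⟨hs.2, hMS hs.1 hs.2⟩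

lemma HasApproxDerivAt.const_mul {f : ℝ → ℝ} {L t : ℝ} (hf : Measurable f)
    (hd : HasApproxDerivAt f L t) (k : ℝ) : HasApproxDerivAt (fun s => k * f s) (k * L) t := by
  rw [hasApproxDerivAt_iff_tendsto_slope (hf.const_mul k)]
  rw [hasApproxDerivAt_iff_tendsto_slope hf] at hd
  convert hd.const_mul k using 1
  ext s
  simp only [slope_def_field]
  ring

lemma ApproxDiffAE.const_mul {f : ℝ → ℝ} (hf : Measurable f) (hd : ApproxDiffAE f) (k : ℝ) :
    ApproxDiffAE fun s => k * f s := by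
  filter_upwards [hd] with t ⟨L, hL⟩ using ⟨k * L, hL.const_mul hf k⟩

lemma ae_tendsto_approxNhds {f : ℝ → ℝ} (hf : Measurable f) :
    ∀ᵐ t, Tendsto f (approxNhds t) (𝓝 (f t)) := by
  have hdens : ∀ᵐ t, ∀ p q : ℚ, f t ∈ Ioo (p : ℝ) q → densityOne (f ⁻¹' Ioo (p : ℝ) q) t := by
    simp only [ae_all_iff]
    exact fun p q => ae_densityOne (hf measurableSet_Ioo)
  filter_upwards [hdens] with t ht
  refine (nhds_basis_Ioo (f t)).tendsto_right_iff.2 fun ⟨a, b⟩ ⟨ha, hb⟩ => ?_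
  obtain ⟨p, hap, hp⟩ := exists_rat_btwn ha
  obtain ⟨q, hq, hqb⟩ := exists_rat_btwn hb
  exact mem_of_superset (mem_approxNhds (hf measurableSet_Ioo) (ht p q ⟨hp, hq⟩))
    fun s hs => ⟨hap.trans hs.1, hs.2.trans hqb⟩

section MonicPolynomial

variable {α : Type*}

def monicEval (n : ℕ) (c : ℕ → α → ℝ) (s : α) (y : ℝ) : ℝ :=
  y ^ n + ∑ i ∈ Finset.range n, c i s * y ^ i

/-- The divided difference `(p x - p y) / (x - y)` of `p = monicEval n c s`, written so that it
makes sense (and equals `∂p/∂y`) on the diagonal `x = y`. -/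
def monicDivDiff (n : ℕ) (c : ℕ → α → ℝ) (s : α) (x y : ℝ) : ℝ :=
  ∑ j ∈ Finset.range n, x ^ j * y ^ (n - 1 - j) +
    ∑ i ∈ Finset.range n, c i s * ∑ j ∈ Finset.range i, x ^ j * y ^ (i - 1 - j)

lemma measurable_monicEval [MeasurableSpace α] {n : ℕ} {c : ℕ → α → ℝ} {h : α → ℝ}
    (hc : ∀ i < n, Measurable (c i)) (hh : Measurable h) :
    Measurable fun s => monicEval n c s (h s) :=
  (hh.pow_const n).add <| Finset.measurable_sum _ fun i hi =>
    (hc i (Finset.mem_range.1 hi)).mul (hh.pow_const i)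

lemma tendsto_monicDivDiff {l : Filter α} {n : ℕ} {c : ℕ → α → ℝ} {s₀ : α} {x : α → ℝ}
    {x₀ : ℝ} (hc : ∀ i < n, Tendsto (c i) l (𝓝 (c i s₀))) (hx : Tendsto x l (𝓝 x₀)) (y : ℝ) :
    Tendsto (fun s => monicDivDiff n c s (x s) y) l (𝓝 (monicDivDiff n c s₀ x₀ y)) := by
  have hgeom : ∀ m : ℕ, Tendsto (fun s => ∑ j ∈ Finset.range m, x s ^ j * y ^ (m - 1 - j)) l
      (𝓝 (∑ j ∈ Finset.range m, x₀ ^ j * y ^ (m - 1 - j))) := fun m =>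
    tendsto_finsetSum _ fun j _ => (hx.pow j).mul_const _
  exact (hgeom n).add <| tendsto_finsetSum _ fun i hi =>
    (hc i (Finset.mem_range.1 hi)).mul (hgeom i)

lemma monicDivDiff_self (n : ℕ) (c : ℕ → α → ℝ) (s : α) (y : ℝ) :
    monicDivDiff (n + 1) c s y y =
      (n + 1) * monicEval n (fun j s => (j + 1) / (n + 1) * c (j + 1) s) s y := by
  have hn : (n : ℝ) + 1 ≠ 0 := by positivity
  simp only [monicDivDiff, monicEval, geom_sum₂_self]
  rw [Finset.sum_range_succ', mul_add, Finset.mul_sum]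
  push_cast
  simp only [zero_mul, mul_zero, add_zero]
  congr 1
  refine Finset.sum_congr rfl fun j _ => ?_
  field_simp

end MonicPolynomial

lemma monicEval_sub_monicEval (n : ℕ) (c : ℕ → ℝ → ℝ) (s t x y : ℝ) :
    monicEval n c s x - monicEval n c t y =
      (x - y) * monicDivDiff n c s x y +
        (s - t) * ∑ i ∈ Finset.range n, slope (c i) t s * y ^ i := by
  have hgeom : ∀ m : ℕ, (x - y) * ∑ j ∈ Finset.range m, x ^ j * y ^ (m - 1 - j) = x ^ m - y ^ m :=
    fun m => by rw [mul_comm, geom_sum₂_mul]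
  have hslope : ∀ i, (s - t) * slope (c i) t s = c i s - c i t := fun i => by simpa using sub_smul_slope (c i) t s
  have hterm : ∀ i, (x - y) * (c i s * ∑ j ∈ Finset.range i, x ^ j * y ^ (i - 1 - j)) +
      (s - t) * (slope (c i) t s * y ^ i) = c i s * x ^ i - c i t * y ^ i := fun i => by
    rw [mul_left_comm, hgeom, ← mul_assoc, hslope]
    ring
  rw [monicEval, monicEval, monicDivDiff, mul_add, hgeom, Finset.mul_sum, Finset.mul_sum,
    add_assoc, ← Finset.sum_add_distrib, Finset.sum_congr rfl fun i _ => hterm i,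
    Finset.sum_sub_distrib]
  ring

lemma tendsto_of_tendsto_slope {f : ℝ → ℝ} {l : Filter ℝ} {t L : ℝ} (hl : l ≤ 𝓝 t)
    (hf : Tendsto (slope f t) l (𝓝 L)) : Tendsto f l (𝓝 (f t)) := by
  have hlin : Tendsto (fun s => (s - t) * slope f t s + f t) l (𝓝 ((t - t) * L + f t)) :=
    (((tendsto_id.mono_left hl).sub_const t).mul hf).add_const _
  rw [sub_self, zero_mul, zero_add] at hlin
  exact hlin.congr fun s => sub_smul_slope_vadd f t s

lemma exists_tendsto_slope_of_monicEval_eq_zero {l : Filter ℝ} {n : ℕ} {c : ℕ → ℝ → ℝ}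
    {h : ℝ → ℝ} {t : ℝ} (hl : l ≤ 𝓝[≠] t) (hc : ∀ i < n, ∃ L, Tendsto (slope (c i) t) l (𝓝 L))
    (hh : Tendsto h l (𝓝 (h t))) (hroot : ∀ᶠ s in l, monicEval n c s (h s) = 0)
    (hroot_t : monicEval n c t (h t) = 0) (hsimple : monicDivDiff n c t (h t) (h t) ≠ 0) :
    ∃ L, Tendsto (slope h t) l (𝓝 L) := by
  choose! L hL using hc
  have hG := tendsto_monicDivDiff
    (fun i hi => tendsto_of_tendsto_slope (hl.trans nhdsWithin_le_nhds) (hL i hi)) hh (h t)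
  have hD : Tendsto (fun s => ∑ i ∈ Finset.range n, slope (c i) t s * h t ^ i) l
      (𝓝 (∑ i ∈ Finset.range n, L i * h t ^ i)) :=
    tendsto_finsetSum _ fun i hi => (hL i (Finset.mem_range.1 hi)).mul_const _
  refine ⟨_, (hD.neg.div hG hsimple).congr' ?_⟩
  filter_upwards [hroot, hG.eventually_ne hsimple, hl self_mem_nhdsWithin]
    with s hs hGs (hst : s ≠ t)
  have hid := monicEval_sub_monicEval n c s t (h s) (h t)
  have hh_sub : h s - h t = (s - t) * slope h t s := by simpa using (sub_smul_slope h t s).symm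
  rw [hs, hroot_t, sub_self, hh_sub, mul_assoc, ← mul_add, eq_comm, mul_eq_zero,
    or_iff_right (sub_ne_zero.2 hst)] at hid
  rw [Pi.div_apply, div_eq_iff hGs]
  linarith

lemma ae_monicDivDiff_eq_zero {h : ℝ → ℝ} (hh : Measurable h) {n : ℕ} {c : ℕ → ℝ → ℝ}
    (hcm : ∀ i < n, Measurable (c i)) {X : Set ℝ} (hX : MeasurableSet X)
    (hcd : ∀ i < n, ∀ᵐ t ∂volume.restrict X, ∃ L, HasApproxDerivAt (c i) L t)
    (hnd : ∀ t ∈ X, ∀ L, ¬ HasApproxDerivAt h L t)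
    (hroot : ∀ᵐ t ∂volume.restrict X, monicEval n c t (h t) = 0) :
    ∀ᵐ t ∂volume.restrict X, monicDivDiff n c t (h t) (h t) = 0 := by
  set Z := X ∩ {t | monicEval n c t (h t) = 0}
  have hZ : MeasurableSet Z :=
    hX.inter (measurableSet_eq_fun (measurable_monicEval hcm hh) measurable_const)
  have hcd' : ∀ᵐ t ∂volume.restrict X, ∀ i < n, ∃ L, HasApproxDerivAt (c i) L t := by
    simp only [ae_all_iff]
    exact fun i hi => hcd i hi
  filter_upwards [ae_restrict_mem hX, hroot, hcd', ae_restrict_of_ae (ae_densityOne hZ),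
    ae_restrict_of_ae (ae_tendsto_approxNhds hh)] with t htX hrt hct hdens hcont
  by_contra hsimple
  have hl : approxNhds t ⊓ 𝓟 {t}ᶜ ≤ 𝓝[≠] t := inf_le_inf_right _ (approxNhds_le_nhds t)
  have hZl : Z ∈ approxNhds t ⊓ 𝓟 {t}ᶜ := mem_inf_of_left (mem_approxNhds hZ (hdens ⟨htX, hrt⟩))
  obtain ⟨L, hL⟩ := exists_tendsto_slope_of_monicEval_eq_zero hl
    (fun i hi => (hct i hi).imp fun L => (hasApproxDerivAt_iff_tendsto_slope (hcm i hi)).1)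
    (hcont.mono_left inf_le_left) (mem_of_superset hZl fun s hs => hs.2) hrt hsimple
  exact hnd t htX L ((hasApproxDerivAt_iff_tendsto_slope hh).2 hL)

lemma not_ae_monicEval_eq_zero {h : ℝ → ℝ} (hh : Measurable h)
    (hnd : ∀ t ∈ Icc (0 : ℝ) 1, ∀ L, ¬ HasApproxDerivAt h L t) (n : ℕ) {c : ℕ → ℝ → ℝ}
    (hc : ∀ i < n, Measurable (c i) ∧ ApproxDiffAE (c i)) {X : Set ℝ} (hX : MeasurableSet X)
    (hXI : X ⊆ Icc 0 1) (hXpos : 0 < volume X) :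
    ¬ ∀ᵐ t ∂volume.restrict X, monicEval n c t (h t) = 0 := by
  induction n generalizing c with
  | zero =>
    simp [monicEval, Measure.restrict_eq_zero, hXpos.ne']
  | succ n ih =>
    intro hroot
    have hsimple := ae_monicDivDiff_eq_zero hh (fun i hi => (hc i hi).1) hX
      (fun i hi => ae_restrict_of_ae_restrict_of_subset hXI (hc i hi).2)
      (fun t ht => hnd t (hXI ht)) hroot
    refine ih (c := fun j s => (j + 1) / (n + 1) * c (j + 1) s) (fun j hj => ?_) ?_
    · obtain ⟨hm, hd⟩ := hc (j + 1) (by omega)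
      exact ⟨hm.const_mul _, hd.const_mul hm _⟩
    · filter_upwards [hsimple] with t ht
      rw [monicDivDiff_self] at ht
      exact (mul_eq_zero.1 ht).resolve_left (by positivity)

/-- Let `h` be a measurable function on `[0,1]` which is nowhere approximately
differentiable.  Then for every monic polynomial `p` with coefficients in `AD[0,1]`,
`p(h)` does not vanish a.e. on any set `X ⊆ [0,1]` of positive measure (so `χ_X · h`
is never integral over `AD[0,1]`).  In particular (the case `n = 1`), for every
`a ∈ AD[0,1]` the function `h − a` is nonzero a.e., i.e. invertible in `S[0,1]`. -/
theorem stmt_18 (h : ℝ → ℝ) (hmeas : Measurable h)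
    (hnad : ∀ t ∈ Icc (0:ℝ) 1, ∀ L : ℝ, ¬ HasApproxDerivAt h L t) :
    (∀ n : ℕ, 0 < n → ∀ c : ℕ → ℝ → ℝ,
      (∀ i < n, Measurable (c i) ∧ ApproxDiffAE (c i)) →
      ∀ X : Set ℝ, MeasurableSet X → X ⊆ Icc (0:ℝ) 1 → 0 < volume X →
        ¬ (∀ᵐ t ∂(volume.restrict X),
            h t ^ n + ∑ i ∈ Finset.range n, c i t * h t ^ i = 0))
    ∧ (∀ a : ℝ → ℝ, Measurable a → ApproxDiffAE a →
        ∀ᵐ t ∂(volume.restrict (Icc (0:ℝ) 1)), h t - a t ≠ 0) := by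
  refine ⟨fun n _ c hc X hX hXI hXpos =>
    not_ae_monicEval_eq_zero hmeas hnad n hc hX hXI hXpos, fun a ha had => ?_⟩
  set X := Icc (0 : ℝ) 1 ∩ {t | h t - a t = 0}
  have hX : MeasurableSet X :=
    measurableSet_Icc.inter (measurableSet_eq_fun (hmeas.sub ha) measurable_const)
  have hX0 : volume X = 0 := by
    by_contra hXpos
    refine not_ae_monicEval_eq_zero hmeas hnad 1 (c := fun _ t => -1 * a t)
      (fun _ _ => ⟨ha.const_mul _, had.const_mul ha _⟩) hX inter_subset_left
      (pos_iff_ne_zero.2 hXpos) (ae_restrict_of_forall_mem hX fun t ht => ?_)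
    simpa [monicEval, sub_eq_add_neg] using ht.2
  rw [ae_restrict_iff' measurableSet_Icc]
  exact measure_eq_zero_iff_ae_notMem.1 hX0 |>.mono fun t ht htI hzero => ht ⟨htI, hzero⟩
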